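/- arXiv:2406.15772 — 4 statements merged into one kernel-verified Lean document; each statement's English description precedes it below -/
import Mathlib

section
/- Let X and Y be metric spaces, X × Y with the max metric. If A ⊆ X is clopen and Cent_Y(B) = ∅ for B ⊆ Y, then Cent_{X×Y}(A × B) = ∅. -/
open EMetric Set ENNReal

/-- The center of a subset `A`: points of `A` at maximal distance from the boundary. -/
def cent {X : Type*} [MetricSpace X] (A : Set X) : Set X :=
  {a ∈ A | ∀ b ∈ A, EMetric.infEdist b (frontier A) ≤ EMetric.infEdist a (frontier A)}

/-- The radius of a subset `A`: the distance between its center and its boundary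
(`∞` when the center is empty or the boundary is empty). -/
noncomputable def rad {X : Type*} [MetricSpace X] (A : Set X) : ℝ≥0∞ :=
  ⨅ a ∈ cent A, EMetric.infEdist a (frontier A)

/-!
Over a clopen `A` the boundary of `A × B` is `A × ∂B`, and for a point `(a, b)` with `a ∈ A` the
max-distance to `A × ∂B` is just the distance from `b` to `∂B`. Hence the second coordinate of a
center of `A × B` is a center of `B`.
-/

open Metric

theorem frontier_prod_of_isClopen_left {X Y : Type*} [TopologicalSpace X] [TopologicalSpace Y]
    {s : Set X} (hs : IsClopen s) (t : Set Y) : frontier (s ×ˢ t) = s ×ˢ frontier t := by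
  rw [frontier_prod_eq, hs.frontier_eq, hs.isClosed.closure_eq, empty_prod, union_empty]

theorem infEDist_mk_prod_of_mem {α β : Type*} [PseudoEMetricSpace α] [PseudoEMetricSpace β]
    {s : Set α} {a : α} (ha : a ∈ s) (b : β) (t : Set β) :
    infEDist (a, b) (s ×ˢ t) = infEDist b t := by
  rw [infEDist_prod, infEDist_zero_of_mem ha, zero_max]

theorem mem_cent_iff {X : Type*} [MetricSpace X] {A : Set X} {a : X} :
    a ∈ cent A ↔ a ∈ A ∧ ∀ b ∈ A, infEDist b (frontier A) ≤ infEDist a (frontier A) :=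
  Iff.rfl

theorem mem_cent_of_mk_mem_cent_prod {X Y : Type*} [MetricSpace X] [MetricSpace Y]
    {A : Set X} {B : Set Y} (hA : IsClopen A) {a : X} {b : Y} (h : (a, b) ∈ cent (A ×ˢ B)) :
    b ∈ cent B := by
  obtain ⟨⟨ha, hb⟩, hmax⟩ := mem_cent_iff.1 h
  refine mem_cent_iff.2 ⟨hb, fun y hy => ?_⟩
  simpa only [frontier_prod_of_isClopen_left hA, infEDist_mk_prod_of_mem ha]
    using hmax (a, y) ⟨ha, hy⟩

theorem cent_prod_empty_of_clopen {X Y : Type*} [MetricSpace X] [MetricSpace Y]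
    (A : Set X) (B : Set Y) (hA : IsClopen A) (hB : cent B = ∅) :
    cent (A ×ˢ B) = ∅ :=
  eq_empty_of_forall_notMem fun _ h => hB.subset (mem_cent_of_mk_mem_cent_prod hA h)
end

section
/- Let X and Y be metric spaces, X × Y with the max metric. If Cent_X(A) = ∅ and Cent_Y(B) = ∅ for A ⊆ X, B ⊆ Y, then Cent_{X×Y}(A × B) = ∅. -/
open EMetric Set ENNReal

open Metric

/-- The frontier of `A ×ˢ B` is `(closure A ×ˢ frontier B) ∪ (frontier A ×ˢ closure B)`, and a
point of `A ×ˢ B` is at distance `0` from each closure factor. -/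
theorem infEDist_frontier_prod_of_mem {X Y : Type*} [PseudoEMetricSpace X]
    [PseudoEMetricSpace Y] {A : Set X} {B : Set Y} {p : X × Y} (hp : p ∈ A ×ˢ B) :
    infEDist p (frontier (A ×ˢ B)) =
      min (infEDist p.1 (frontier A)) (infEDist p.2 (frontier B)) := by
  rw [frontier_prod_eq, infEDist_union, infEDist_prod, infEDist_prod,
    infEDist_zero_of_mem (subset_closure hp.1), infEDist_zero_of_mem (subset_closure hp.2)]
  simp only [zero_max, max_zero, min_comm]

theorem cent_eq_empty_iff {X : Type*} [MetricSpace X] {A : Set X} :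
    cent A = ∅ ↔ ∀ a ∈ A, ∃ b ∈ A, infEDist a (frontier A) < infEDist b (frontier A) := by
  simp only [cent, eq_empty_iff_forall_notMem, mem_ofPred_eq, not_and, not_forall, not_le,
    exists_prop]
  -- `cent` is written with `EMetric.infEdist`, a deprecated alias of `Metric.infEDist`.
  rfl

theorem cent_prod_empty {X Y : Type*} [MetricSpace X] [MetricSpace Y]
    (A : Set X) (B : Set Y) (hA : cent A = ∅) (hB : cent B = ∅) :
    cent (A ×ˢ B) = ∅ := by
  rw [cent_eq_empty_iff] at hA hB ⊢
  rintro ⟨a, b⟩ hab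
  obtain ⟨a', ha', ha_lt⟩ := hA a hab.1
  obtain ⟨b', hb', hb_lt⟩ := hB b hab.2
  refine ⟨(a', b'), ⟨ha', hb'⟩, ?_⟩
  rw [infEDist_frontier_prod_of_mem hab, infEDist_frontier_prod_of_mem ⟨ha', hb'⟩]
  exact min_lt_min ha_lt hb_lt
end

section
/- Let A and B be separated subsets (closure(A) ∩ B = A ∩ closure(B) = ∅), neither clopen, of a metric space X with rad_X(A) > rad_X(B). Let Ã = {a ∈ Cent_X(A) | d(a, ∂B) < rad_X(A)}. If Cent_X(A) \ Ã ≠ ∅, then Cent_X(A ∪ B) = Cent_X(A) \ Ã and rad_X(A ∪ B) = rad_X(A). -/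
/-! Separation gives `∂(A ∪ B) = ∂A ∪ ∂B`, so the distance to `∂(A ∪ B)` is the minimum of
the distances to `∂A` and to `∂B`. On `B` this minimum stays below `rad B < rad A`; on `A` it is
at most `rad A`, with equality exactly at the centres of `A` at distance at least `rad A` from
`∂B`. Such centres exist by assumption, so they are the maximisers over `A ∪ B`. -/

open EMetric Set ENNReal

set_option linter.deprecated false

lemma frontier_subset_frontier_union_of_separated {X : Type*} [TopologicalSpace X] {s t : Set X}
    (h₁ : Disjoint (closure s) t) (h₂ : Disjoint s (closure t)) :
    frontier s ⊆ frontier (s ∪ t) := by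
  intro x hx
  rw [frontier_eq_closure_inter_closure] at hx ⊢
  refine ⟨closure_mono subset_union_left hx.1, ?_⟩
  rw [compl_union]
  by_cases hxt : x ∈ closure t
  · exact subset_closure ⟨h₂.notMem_of_mem_right hxt, h₁.notMem_of_mem_left hx.1⟩
  · have hx' : x ∈ (closure t)ᶜ ∩ closure sᶜ := ⟨hxt, hx.2⟩
    refine closure_mono ?_ (isClosed_closure.isOpen_compl.inter_closure hx')
    exact fun y hy => ⟨hy.2, fun hyt => hy.1 (subset_closure hyt)⟩

lemma frontier_union_of_separated {X : Type*} [TopologicalSpace X] {s t : Set X}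
    (h₁ : Disjoint (closure s) t) (h₂ : Disjoint s (closure t)) :
    frontier (s ∪ t) = frontier s ∪ frontier t := by
  refine (frontier_union_subset s t).trans (union_subset_union inter_subset_left
    inter_subset_right) |>.antisymm (union_subset ?_ ?_)
  · exact frontier_subset_frontier_union_of_separated h₁ h₂
  · rw [union_comm]
    exact frontier_subset_frontier_union_of_separated h₂.symm h₁.symm

section CentRad

variable {X : Type*} [MetricSpace X] {S : Set X} {r : ℝ≥0∞}

lemma rad_eq_infEdist_of_mem_cent {a : X} (ha : a ∈ cent S) :
    rad S = infEdist a (frontier S) :=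
  le_antisymm (iInf₂_le a ha) (le_iInf₂ fun _ hb => hb.2 a ha.1)

lemma cent_nonempty_of_rad_ne_top (h : rad S ≠ ⊤) : (cent S).Nonempty := by
  contrapose! h
  simp [rad, h]

lemma isGreatest_rad (h : (cent S).Nonempty) :
    IsGreatest ((infEdist · (frontier S)) '' S) (rad S) := by
  obtain ⟨a, ha⟩ := h
  rw [rad_eq_infEdist_of_mem_cent ha]
  exact ⟨mem_image_of_mem _ ha.1, forall_mem_image.2 ha.2⟩

lemma infEdist_frontier_le_rad (h : rad S ≠ ⊤) {x : X} (hx : x ∈ S) :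
    infEdist x (frontier S) ≤ rad S :=
  (isGreatest_rad (cent_nonempty_of_rad_ne_top h)).2 (mem_image_of_mem _ hx)

lemma cent_eq_of_isGreatest (h : IsGreatest ((infEdist · (frontier S)) '' S) r) :
    cent S = {x ∈ S | infEdist x (frontier S) = r} := by
  obtain ⟨⟨a, ha, rfl⟩, hub⟩ := h
  ext x
  constructor
  · rintro ⟨hx, hmax⟩
    exact ⟨hx, le_antisymm (hub (mem_image_of_mem _ hx)) (hmax a ha)⟩
  · rintro ⟨hx, hxr⟩
    exact ⟨hx, fun b hb => hxr ▸ hub (mem_image_of_mem _ hb)⟩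

lemma rad_eq_of_isGreatest (h : IsGreatest ((infEdist · (frontier S)) '' S) r) : rad S = r := by
  obtain ⟨a, ha, har⟩ := h.1
  have hac : a ∈ cent S := by
    rw [cent_eq_of_isGreatest h]
    exact ⟨ha, har⟩
  rw [rad_eq_infEdist_of_mem_cent hac]
  exact har

end CentRad

section Separated

variable {X : Type*} [MetricSpace X] {A B : Set X}
  (h₁ : Disjoint (closure A) B) (h₂ : Disjoint A (closure B))
include h₁ h₂

lemma infEdist_frontier_union_of_separated (x : X) :
    infEdist x (frontier (A ∪ B)) = infEdist x (frontier A) ⊓ infEdist x (frontier B) := by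
  rw [frontier_union_of_separated h₁ h₂]
  exact infEdist_union

lemma infEdist_frontier_union_lt_rad (hrad : rad B < rad A) {y : X} (hy : y ∈ B) :
    infEdist y (frontier (A ∪ B)) < rad A := by
  rw [infEdist_frontier_union_of_separated h₁ h₂]
  exact inf_le_right.trans_lt ((infEdist_frontier_le_rad hrad.ne_top hy).trans_lt hrad)

lemma infEdist_frontier_union_le_rad (hA : (cent A).Nonempty) (hrad : rad B < rad A) {x : X}
    (hx : x ∈ A ∪ B) : infEdist x (frontier (A ∪ B)) ≤ rad A := by
  rcases hx with hx | hx
  · rw [infEdist_frontier_union_of_separated h₁ h₂]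
    exact inf_le_left.trans ((isGreatest_rad hA).2 (mem_image_of_mem _ hx))
  · exact (infEdist_frontier_union_lt_rad h₁ h₂ hrad hx).le

lemma setOf_infEdist_frontier_union_eq_rad (hA : (cent A).Nonempty) (hrad : rad B < rad A) :
    {x ∈ A ∪ B | infEdist x (frontier (A ∪ B)) = rad A} =
      {x ∈ cent A | rad A ≤ infEdist x (frontier B)} := by
  rw [cent_eq_of_isGreatest (isGreatest_rad hA)]
  ext x
  simp only [mem_setOf_eq, infEdist_frontier_union_of_separated h₁ h₂]
  constructor
  · rintro ⟨hx, hdx⟩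
    have hxA : x ∈ A := hx.resolve_right fun hxB =>
      (infEdist_frontier_union_lt_rad h₁ h₂ hrad hxB).ne
        (by rwa [infEdist_frontier_union_of_separated h₁ h₂])
    have hfx : infEdist x (frontier A) = rad A :=
      le_antisymm ((isGreatest_rad hA).2 (mem_image_of_mem _ hxA)) (hdx ▸ inf_le_left)
    exact ⟨⟨hxA, hfx⟩, hdx ▸ inf_le_right⟩
  · rintro ⟨⟨hx, hfx⟩, hgx⟩
    rw [hfx]
    exact ⟨Or.inl hx, inf_eq_left.2 hgx⟩

end Separated

theorem cent_rad_union_general {X : Type*} [MetricSpace X] (A B : Set X)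
    (hsep₁ : closure A ∩ B = ∅) (hsep₂ : A ∩ closure B = ∅)
    (hrad : rad B < rad A)
    (At : Set X) (hAt : At = {a ∈ cent A | EMetric.infEdist a (frontier B) < rad A})
    (hne : (cent A \ At).Nonempty) :
    cent (A ∪ B) = cent A \ At ∧ rad (A ∪ B) = rad A := by
  have h₁ := disjoint_iff_inter_eq_empty.2 hsep₁
  have h₂ := disjoint_iff_inter_eq_empty.2 hsep₂
  obtain ⟨a₀, ha₀⟩ := hne
  have hA : (cent A).Nonempty := ⟨a₀, ha₀.1⟩
  have hcent : cent A \ At = {x ∈ A ∪ B | infEdist x (frontier (A ∪ B)) = rad A} := by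
    rw [setOf_infEdist_frontier_union_eq_rad h₁ h₂ hA hrad, hAt]
    ext x
    simp only [mem_diff, mem_setOf_eq, not_and, not_lt]
    tauto
  have hgreat : IsGreatest ((infEdist · (frontier (A ∪ B))) '' (A ∪ B)) (rad A) := by
    rw [hcent] at ha₀
    exact ⟨⟨a₀, ha₀⟩, forall_mem_image.2 fun x hx =>
      infEdist_frontier_union_le_rad h₁ h₂ hA hrad hx⟩
  exact ⟨(cent_eq_of_isGreatest hgreat).trans hcent.symm, rad_eq_of_isGreatest hgreat⟩

theorem cent_rad_union {X : Type*} [MetricSpace X] (A B : Set X)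
    (hsep₁ : closure A ∩ B = ∅) (hsep₂ : A ∩ closure B = ∅)
    (hA : ¬ IsClopen A) (hB : ¬ IsClopen B)
    (hrad : rad B < rad A)
    (At : Set X) (hAt : At = {a ∈ cent A | EMetric.infEdist a (frontier B) < rad A})
    (hne : (cent A \ At).Nonempty) :
    cent (A ∪ B) = cent A \ At ∧ rad (A ∪ B) = rad A :=
  cent_rad_union_general A B hsep₁ hsep₂ hrad At hAt hne
end

section
/- Let A and B be separated, non-clopen subsets of a metric space X. Then the semi-radius of A ∪ B satisfies Srad_X(A ∪ B) ≤ max(rad_X(A), rad_X(B)). -/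
open EMetric Set ENNReal

lemma infEdist_le_rad {X : Type*} [MetricSpace X] {A : Set X} {x : X} (hx : x ∈ A) :
    EMetric.infEdist x (frontier A) ≤ rad A :=
  le_iInf₂ fun _ ha => ha.2 x hx

lemma frontier_subset_frontier_union {X : Type*} [MetricSpace X] {A B : Set X}
    (hsep₁ : closure A ∩ B = ∅) (hsep₂ : A ∩ closure B = ∅) :
    frontier A ⊆ frontier (A ∪ B) := by
  rintro x ⟨hxc, hxni⟩
  refine ⟨closure_mono subset_union_left hxc, fun hint => ?_⟩
  have hxAB : x ∈ A ∪ B := interior_subset hint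
  have hxA : x ∈ A := by
    rcases hxAB with h | h
    · exact h
    · exact absurd (Set.mem_inter hxc h) (by simp [hsep₁])
  have hxnB : x ∉ closure B := fun h => by
    have : x ∈ A ∩ closure B := ⟨hxA, h⟩
    simp [hsep₂] at this
  have hopen : IsOpen (interior (A ∪ B) ∩ (closure B)ᶜ) :=
    isOpen_interior.inter isClosed_closure.isOpen_compl
  have hsub : interior (A ∪ B) ∩ (closure B)ᶜ ⊆ A := by
    rintro y ⟨hy, hyB⟩
    rcases interior_subset hy with h | h
    · exact h
    · exact absurd (subset_closure h) hyB
  have hxmem : x ∈ interior (interior (A ∪ B) ∩ (closure B)ᶜ) :=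
    hopen.interior_eq.symm ▸ (⟨hint, hxnB⟩ : x ∈ interior (A ∪ B) ∩ (closure B)ᶜ)
  exact hxni (interior_mono hsub hxmem)

theorem srad_union_le_max {X : Type*} [MetricSpace X] (A B : Set X)
    (hsep₁ : closure A ∩ B = ∅) (hsep₂ : A ∩ closure B = ∅)
    (hA : ¬ IsClopen A) (hB : ¬ IsClopen B) :
    ⨆ x ∈ A ∪ B, EMetric.infEdist x (frontier (A ∪ B)) ≤ max (rad A) (rad B) := by
  refine iSup₂_le fun x hx => ?_
  rcases hx with h | h
  · exact le_max_of_le_left <|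
      (infEdist_anti (frontier_subset_frontier_union hsep₁ hsep₂)).trans (infEdist_le_rad h)
  · have h' : frontier B ⊆ frontier (A ∪ B) := by
      rw [Set.union_comm]
      exact frontier_subset_frontier_union
        (by rwa [Set.inter_comm] at hsep₂) (by rwa [Set.inter_comm] at hsep₁)
    exact le_max_of_le_right <| (infEdist_anti h').trans (infEdist_le_rad h)
end
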